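/- Two expected-utility functionals u⁽¹⁾(π) = Σ_{x∈X} Σ_{y∈Y} π(y|x) r⁽¹⁾(x,y) and u⁽²⁾(π) = Σ_{x∈X} Σ_{y∈Y} π(y|x) r⁽²⁾(x,y) represent the same preference order over all models π (i.e., u⁽¹⁾(π) ≥ u⁽¹⁾(π') ⟺ u⁽²⁾(π) ≥ u⁽²⁾(π') for all π, π') if and only if there exist a > 0 and b : X → ℝ such that r⁽¹⁾(x,y) = a·r⁽²⁾(x,y) + b(x) for all x, y. -/

import Mathlib

/-- A model maps each prompt to a probability vector over responses. -/
def IsModel {X Y : Type*} [Fintype Y] (π : X → Y → ℝ) : Prop :=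
  (∀ x y, 0 ≤ π x y) ∧ ∀ x, ∑ y, π x y = 1

/-- Expected utility of a model under reward `r`. -/
def expUtility {X Y : Type*} [Fintype X] [Fintype Y] (r : X → Y → ℝ) (π : X → Y → ℝ) : ℝ :=
  ∑ x, ∑ y, π x y * r x y

/-!
Both utilities are affine in the model and the models form a convex set. If `u₂(p) - u₂(q) = d ≥ 0`
and `u₂(p₀) - u₂(q₀) = Δ ≥ 0`, the mixtures `Δ p + d q₀` and `Δ q + d p₀` (normalised) have the same
`u₂`-value, hence the same `u₁`-value, which gives `Δ (u₁ p - u₁ q) = d (u₁ p₀ - u₁ q₀)`: all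
`u₁`-differences are one positive multiple of the `u₂`-differences. Comparing the deterministic model
answering `y₀` everywhere with the one answering `y` at `x` isolates `r x y - r x y₀`.
-/

open Finset

section AffineOrder

variable {E : Type*} [AddCommGroup E] [Module ℝ E] {S : Set E} {f g : E →ᵃ[ℝ] ℝ}

theorem Convex.mul_sub_eq_mul_sub_of_le_iff_le (hS : Convex ℝ S)
    (h : ∀ p ∈ S, ∀ q ∈ S, f q ≤ f p ↔ g q ≤ g p) {p q p₀ q₀ : E}
    (hp : p ∈ S) (hq : q ∈ S) (hp₀ : p₀ ∈ S) (hq₀ : q₀ ∈ S) :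
    (f p - f q) * (g p₀ - g q₀) = (g p - g q) * (f p₀ - f q₀) := by
  have key : ∀ p ∈ S, ∀ q ∈ S, ∀ p₀ ∈ S, ∀ q₀ ∈ S, g q ≤ g p → g q₀ ≤ g p₀ →
      (f p - f q) * (g p₀ - g q₀) = (g p - g q) * (f p₀ - f q₀) := by
    intro p hp q hq p₀ hp₀ q₀ hq₀ hd hΔ
    set d := g p - g q
    set Δ := g p₀ - g q₀
    rcases (add_nonneg (sub_nonneg.2 hd) (sub_nonneg.2 hΔ)).eq_or_lt with hsum | hsum
    · have hd0 : d = 0 := by linarith [sub_nonneg.2 hΔ]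
      have hΔ0 : Δ = 0 := by linarith [sub_nonneg.2 hd]
      rw [hd0, hΔ0, mul_zero, zero_mul]
    set α := Δ / (d + Δ)
    set β := d / (d + Δ)
    have hα : α * (d + Δ) = Δ := div_mul_cancel₀ _ hsum.ne'
    have hβ : β * (d + Δ) = d := div_mul_cancel₀ _ hsum.ne'
    have hαβ : α + β = 1 := by rw [← add_div, add_comm, div_self hsum.ne']
    have hα0 : 0 ≤ α := div_nonneg (sub_nonneg.2 hΔ) hsum.le
    have hβ0 : 0 ≤ β := div_nonneg (sub_nonneg.2 hd) hsum.le
    clear_value α β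
    have hP := hS hp hq₀ hα0 hβ0 hαβ
    have hQ := hS hq hp₀ hα0 hβ0 hαβ
    have hg : g (α • p + β • q₀) = g (α • q + β • p₀) := by
      rw [Convex.combo_affine_apply hαβ, Convex.combo_affine_apply hαβ]
      simp only [smul_eq_mul]
      linear_combination hα - Δ * hαβ
    have hf : f (α • p + β • q₀) = f (α • q + β • p₀) :=
      le_antisymm ((h _ hQ _ hP).2 hg.le) ((h _ hP _ hQ).2 hg.ge)
    rw [Convex.combo_affine_apply hαβ, Convex.combo_affine_apply hαβ] at hf
    simp only [smul_eq_mul] at hf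
    linear_combination (d + Δ) * hf - (f p - f q) * hα + (f p₀ - f q₀) * hβ
  rcases le_total (g q) (g p) with hd | hd <;> rcases le_total (g q₀) (g p₀) with hΔ | hΔ
  · exact key p hp q hq p₀ hp₀ q₀ hq₀ hd hΔ
  · linear_combination -key p hp q hq q₀ hq₀ p₀ hp₀ hd hΔ
  · linear_combination -key q hq p hp p₀ hp₀ q₀ hq₀ hd hΔ
  · linear_combination key q hq p hp q₀ hq₀ p₀ hp₀ hd hΔ

theorem Convex.exists_pos_sub_eq_mul_sub_of_le_iff_le (hS : Convex ℝ S)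
    (h : ∀ p ∈ S, ∀ q ∈ S, f q ≤ f p ↔ g q ≤ g p) :
    ∃ a > 0, ∀ p ∈ S, ∀ q ∈ S, f p - f q = a * (g p - g q) := by
  by_cases hg : ∃ p₀ ∈ S, ∃ q₀ ∈ S, g q₀ < g p₀
  · obtain ⟨p₀, hp₀, q₀, hq₀, hlt⟩ := hg
    have hflt : f q₀ < f p₀ := lt_of_not_ge fun hle => hlt.not_ge ((h _ hq₀ _ hp₀).1 hle)
    refine ⟨(f p₀ - f q₀) / (g p₀ - g q₀), div_pos (sub_pos.2 hflt) (sub_pos.2 hlt),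
      fun p hp q hq => ?_⟩
    rw [div_mul_eq_mul_div, eq_div_iff (sub_pos.2 hlt).ne', hS.mul_sub_eq_mul_sub_of_le_iff_le h hp hq hp₀ hq₀, mul_comm]
  · push Not at hg
    refine ⟨1, one_pos, fun p hp q hq => ?_⟩
    have hgpq : g p = g q := le_antisymm (hg p hp q hq) (hg q hq p hp)
    have hfpq : f p = f q := le_antisymm ((h _ hq _ hp).2 hgpq.le) ((h _ hp _ hq).2 hgpq.ge)
    rw [hfpq, hgpq, sub_self, sub_self, mul_zero]

end AffineOrder

section Models

variable {X Y : Type*} [Fintype Y]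

theorem convex_setOf_isModel : Convex ℝ {π : X → Y → ℝ | IsModel π} := by
  rintro π ⟨hπ0, hπ1⟩ π' ⟨hπ'0, hπ'1⟩ a b ha hb hab
  refine ⟨fun x y => ?_, fun x => ?_⟩
  · have := hπ0 x y
    have := hπ'0 x y
    simp only [Pi.add_apply, Pi.smul_apply, smul_eq_mul]
    positivity
  · simp only [Pi.add_apply, Pi.smul_apply, smul_eq_mul, sum_add_distrib, ← mul_sum, hπ1, hπ'1]
    linarith

def expUtilityₗ [Fintype X] (r : X → Y → ℝ) : (X → Y → ℝ) →ₗ[ℝ] ℝ where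
  toFun := expUtility r
  map_add' π π' := by simp only [expUtility, Pi.add_apply, add_mul, sum_add_distrib]
  map_smul' c π := by simp only [expUtility, Pi.smul_apply, smul_eq_mul, mul_sum, mul_assoc,
    RingHom.id_apply]

theorem expUtilityₗ_apply [Fintype X] (r : X → Y → ℝ) (π : X → Y → ℝ) :
    expUtilityₗ r π = expUtility r π :=
  rfl

theorem expUtility_of_eq_mul_add [Fintype X] {a : ℝ} {b : X → ℝ} {r₁ r₂ : X → Y → ℝ}
    (hr : ∀ x y, r₁ x y = a * r₂ x y + b x) {π : X → Y → ℝ} (hπ : IsModel π) :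
    expUtility r₁ π = a * expUtility r₂ π + ∑ x, b x := by
  simp only [expUtility, hr, mul_add, sum_add_distrib, mul_sum, ← sum_mul, hπ.2, one_mul]
  simp only [mul_left_comm]

def deterministicModel [DecidableEq Y] (s : X → Y) : X → Y → ℝ :=
  fun x y => if y = s x then 1 else 0

theorem isModel_deterministicModel [DecidableEq Y] (s : X → Y) :
    IsModel (deterministicModel s) :=
  ⟨fun x y => by unfold deterministicModel; split_ifs <;> norm_num,
    fun x => by simp [deterministicModel]⟩

theorem expUtility_deterministicModel [Fintype X] [DecidableEq Y] (r : X → Y → ℝ) (s : X → Y) :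
    expUtility r (deterministicModel s) = ∑ x, r x (s x) := by
  simp [expUtility, deterministicModel, ite_mul]

theorem expUtility_deterministicModel_update_sub [Fintype X] [DecidableEq X] [DecidableEq Y]
    (r : X → Y → ℝ) (s : X → Y) (x : X) (y : Y) :
    expUtility r (deterministicModel (Function.update s x y)) -
      expUtility r (deterministicModel s) = r x y - r x (s x) := by
  rw [expUtility_deterministicModel, expUtility_deterministicModel, ← sum_sub_distrib,
    sum_eq_single x (fun x' _ hx' => by rw [Function.update_of_ne hx', sub_self])
      (fun hx => absurd (mem_univ x) hx), Function.update_self]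

end Models

theorem stmt_3_general {X Y : Type*} [Fintype X] [Fintype Y] [Nonempty Y]
    (r₁ r₂ : X → Y → ℝ) :
    (∀ π π' : X → Y → ℝ, IsModel π → IsModel π' →
      (expUtility r₁ π ≥ expUtility r₁ π' ↔ expUtility r₂ π ≥ expUtility r₂ π')) ↔
    (∃ a > (0 : ℝ), ∃ b : X → ℝ, ∀ x y, r₁ x y = a * r₂ x y + b x) := by
  classical
  constructor
  · intro h
    obtain ⟨a, ha, hdiff⟩ := convex_setOf_isModel.exists_pos_sub_eq_mul_sub_of_le_iff_le
      (f := (expUtilityₗ r₁).toAffineMap) (g := (expUtilityₗ r₂).toAffineMap)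
      fun π hπ π' hπ' => h π π' hπ hπ'
    let y₀ : Y := Classical.arbitrary Y
    refine ⟨a, ha, fun x => r₁ x y₀ - a * r₂ x y₀, fun x y => ?_⟩
    have hxy := hdiff _ (isModel_deterministicModel (Function.update (fun _ => y₀) x y))
      _ (isModel_deterministicModel fun _ => y₀)
    simp only [LinearMap.coe_toAffineMap, expUtilityₗ_apply,
      expUtility_deterministicModel_update_sub] at hxy
    linear_combination hxy
  · rintro ⟨a, ha, b, hr⟩ π π' hπ hπ'
    rw [expUtility_of_eq_mul_add hr hπ, expUtility_of_eq_mul_add hr hπ', ge_iff_le, ge_iff_le,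
      add_le_add_iff_right, mul_le_mul_iff_right₀ ha]

/-- Two expected-utility functionals represent the same preference order over models
iff the rewards are positive-affine transforms of one another (with prompt-dependent
intercept). -/
theorem stmt_3 {X Y : Type*} [Fintype X] [Fintype Y] [Nonempty X] [Nonempty Y]
    (r₁ r₂ : X → Y → ℝ) :
    (∀ π π' : X → Y → ℝ, IsModel π → IsModel π' →
      (expUtility r₁ π ≥ expUtility r₁ π' ↔ expUtility r₂ π ≥ expUtility r₂ π')) ↔
    (∃ a > (0 : ℝ), ∃ b : X → ℝ, ∀ x y, r₁ x y = a * r₂ x y + b x) :=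
  stmt_3_general r₁ r₂
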